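/- Let n ≥ 2, Π1 ≥ 0, and Π4 > 0. Then the Fourier-domain Kalman filter gain L̂0(k) := D_k/Π4 + √(D_k²/Π4² − Π1·D_k + 1) is constant over k ∈ {0,…,n−1} (i.e., L̂0(k) = L̂0(0) for all k) if and only if Π1·Π4 = 2. -/

import Mathlib

/-- The `k`-th eigenvalue `−4·sin²(πk/n)` of the discrete periodic Laplacian. -/
noncomputable def Dlap (n k : ℕ) : ℝ := -4 * Real.sin (Real.pi * k / n) ^ 2

/-- The scalar Fourier-domain Kalman filter gain at spatial frequency `k` for
the PDE-informed estimation problem with Sobolev measurement-noise weight `Π1`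
and sensing parameter `Π4`. -/
noncomputable def Lhat0 (n : ℕ) (Pi1 Pi4 : ℝ) (k : ℕ) : ℝ :=
  Dlap n k / Pi4 + Real.sqrt ((Dlap n k) ^ 2 / Pi4 ^ 2 - Pi1 * Dlap n k + 1)

/-!
Writing `t = D/Π4`, the radicand is `(1 - t)² + t·(2 - Π1·Π4)`. Since `D ≤ 0`, the candidate root
`1 - t` is positive, so `L̂0 = 1 = L̂0(0)` holds exactly when the correction term `t·(2 - Π1·Π4)`
vanishes; at `k = 1` the eigenvalue `D_1` is nonzero, which forces `Π1·Π4 = 2`.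
-/

lemma Dlap_zero (n : ℕ) : Dlap n 0 = 0 := by
  simp [Dlap]

lemma Dlap_nonpos (n k : ℕ) : Dlap n k ≤ 0 := by
  unfold Dlap
  nlinarith [sq_nonneg (Real.sin (Real.pi * k / n))]

lemma Dlap_neg {n k : ℕ} (hk : 0 < k) (hkn : k < n) : Dlap n k < 0 := by
  have hn : (0 : ℝ) < n := by exact_mod_cast hk.trans hkn
  have hsin : 0 < Real.sin (Real.pi * k / n) := by
    apply Real.sin_pos_of_pos_of_lt_pi (by positivity)
    rw [div_lt_iff₀ hn, mul_lt_mul_iff_right₀ Real.pi_pos]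
    exact_mod_cast hkn
  unfold Dlap
  nlinarith

lemma Lhat0_zero (n : ℕ) (Pi1 Pi4 : ℝ) : Lhat0 n Pi1 Pi4 0 = 1 := by
  simp [Lhat0, Dlap_zero]

lemma add_sqrt_eq_one_iff {c p d : ℝ} (hp : 0 < p) (hd : d ≤ 0) :
    d / p + √(d ^ 2 / p ^ 2 - c * d + 1) = 1 ↔ d = 0 ∨ c * p = 2 := by
  have hroot : 0 < 1 - d / p := by linarith [div_nonpos_of_nonpos_of_nonneg hd hp.le]
  have hradicand : d ^ 2 / p ^ 2 - c * d + 1 = (1 - d / p) ^ 2 + d / p * (2 - c * p) := by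
    field_simp
    ring
  rw [← eq_sub_iff_add_eq', Real.sqrt_eq_iff_mul_self_eq_of_pos hroot, hradicand, ← sq,
    left_eq_add, mul_eq_zero, div_eq_zero_iff, sub_eq_zero, eq_comm (a := 2)]
  simp only [hp.ne', or_false]

lemma Lhat0_eq_one_iff (n k : ℕ) (Pi1 : ℝ) {Pi4 : ℝ} (hPi4 : 0 < Pi4) :
    Lhat0 n Pi1 Pi4 k = 1 ↔ Dlap n k = 0 ∨ Pi1 * Pi4 = 2 :=
  add_sqrt_eq_one_iff hPi4 (Dlap_nonpos n k)

theorem kf_gain_constant_iff_general (n : ℕ) (hn : 2 ≤ n) (Pi1 Pi4 : ℝ)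
    (hPi4 : 0 < Pi4) :
    (∀ k : ℕ, k < n → Lhat0 n Pi1 Pi4 k = Lhat0 n Pi1 Pi4 0) ↔ Pi1 * Pi4 = 2 := by
  simp only [Lhat0_zero, Lhat0_eq_one_iff _ _ _ hPi4]
  refine ⟨fun h => ?_, fun h _ _ => Or.inr h⟩
  exact (h 1 hn).resolve_left (Dlap_neg one_pos hn).ne

/-- The Fourier-domain Kalman filter gain `L̂0(k)` is constant over
`k ∈ {0,…,n−1}` (complete decentralization of the Kalman filter gain) if and
only if `Π1·Π4 = 2`. -/
theorem kf_gain_constant_iff (n : ℕ) (hn : 2 ≤ n) (Pi1 Pi4 : ℝ)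
    (hPi1 : 0 ≤ Pi1) (hPi4 : 0 < Pi4) :
    (∀ k : ℕ, k < n → Lhat0 n Pi1 Pi4 k = Lhat0 n Pi1 Pi4 0) ↔ Pi1 * Pi4 = 2 :=
  kf_gain_constant_iff_general n hn Pi1 Pi4 hPi4
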